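/- arXiv:2305.04148 — 4 statements merged into one kernel-verified Lean document; each statement's English description precedes it below -/
import Mathlib

section
/- (Lemma 1 of the paper.) Let 𝒫 be an n-qubit Pauli channel, 𝒫(σ) = ∑_b p b • (P_b * σ * P_b) with p a probability distribution on (Fin n → Fin 4), and let λ_a = ∑_b (-1)^{⟨a,b⟩} p b be its Pauli eigenvalues. Then for every Pauli string P_a, the uniform average over the 6^n n-fold product Pauli eigenstates ρ satisfies 6^{-n} ∑_ρ tr(P_a * 𝒫(ρ)) · tr(P_a * ρ) = (1/3)^{|a|} · λ_a, where |a| is the number of indices j with a j ≠ 0. -/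
open Matrix Finset

noncomputable section

/-- The four single-qubit Pauli matrices: σ₀ = I, σ₁ = X, σ₂ = Y, σ₃ = Z. -/
def pauli : Fin 4 → Matrix (Fin 2) (Fin 2) ℂ
  | 0 => 1
  | 1 => !![0, 1; 1, 0]
  | 2 => !![0, -Complex.I; Complex.I, 0]
  | 3 => !![1, 0; 0, -1]

/-- The `n`-qubit Pauli string `P_a = σ_{a 1} ⊗ ⋯ ⊗ σ_{a n}` (n-fold Kronecker product),
a `2^n × 2^n` complex matrix indexed by `Fin n → Fin 2`. -/
def PauliString {n : ℕ} (a : Fin n → Fin 4) :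
    Matrix (Fin n → Fin 2) (Fin n → Fin 2) ℂ :=
  fun i k => ∏ j, pauli (a j) (i j) (k j)

/-- `⟨a,b⟩ ∈ {0,1}`: parity of the number of positions where `a` and `b` anticommute. -/
def ppair {n : ℕ} (a b : Fin n → Fin 4) : ℕ :=
  (Finset.univ.filter fun j => a j ≠ 0 ∧ b j ≠ 0 ∧ a j ≠ b j).card % 2

/-- The weight `|a|` of a Pauli string: the number of non-identity tensor factors. -/
def pweight {n : ℕ} (a : Fin n → Fin 4) : ℕ :=
  (Finset.univ.filter fun j => a j ≠ 0).card

/-- The six single-qubit Pauli eigenstates `(I₂ + s•W)/2`, `s ∈ {1,-1}`, `W ∈ {X,Y,Z}`,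
indexed by `Bool × Fin 3`. -/
def eigState : Bool × Fin 3 → Matrix (Fin 2) (Fin 2) ℂ :=
  fun q => (2⁻¹ : ℂ) • (1 + (if q.1 then (1 : ℂ) else -1) • pauli q.2.succ)

/-- The `6^n` n-fold product Pauli eigenstates `ρ₁ ⊗ ⋯ ⊗ ρ_n` with each `ρ_j ∈ S₁`. -/
def prodEigState {n : ℕ} (f : Fin n → Bool × Fin 3) :
    Matrix (Fin n → Fin 2) (Fin n → Fin 2) ℂ :=
  fun i k => ∏ j, eigState (f j) (i j) (k j)

-- auxiliary
lemma pauli_zero : pauli 0 = !![1,0;0,1] := by rw [pauli]; exact Matrix.one_fin_two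
lemma pauli_one : pauli 1 = !![0, 1; 1, 0] := rfl
lemma pauli_two : pauli 2 = !![0, -Complex.I; Complex.I, 0] := rfl
lemma pauli_three : pauli 3 = !![1, 0; 0, -1] := rfl
lemma pauli_mk0 (h : 0 < 4) : pauli ⟨0, h⟩ = !![1,0;0,1] := pauli_zero
lemma pauli_mk1 (h : 1 < 4) : pauli ⟨1, h⟩ = !![0, 1; 1, 0] := rfl
lemma pauli_mk2 (h : 2 < 4) : pauli ⟨2, h⟩ = !![0, -Complex.I; Complex.I, 0] := rfl
lemma pauli_mk3 (h : 3 < 4) : pauli ⟨3, h⟩ = !![1, 0; 0, -1] := rfl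

lemma eig_true (w : Fin 3) :
    eigState (true, w) = (2⁻¹ : ℂ) • !![1,0;0,1] + (2⁻¹ : ℂ) • pauli w.succ := by
  simp [eigState, Matrix.one_fin_two, smul_add]
lemma eig_false (w : Fin 3) :
    eigState (false, w) = (2⁻¹ : ℂ) • !![1,0;0,1] + (-2⁻¹ : ℂ) • pauli w.succ := by
  simp [eigState, Matrix.one_fin_two, smul_add, neg_smul]

def coef (α β : Fin 4) : ℂ :=
  (if α = 0 then 1 else (1/3 : ℂ)) * (if α ≠ 0 ∧ β ≠ 0 ∧ α ≠ β then -1 else 1)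

set_option maxHeartbeats 3200000 in
lemma single (α β : Fin 4) :
    ∑ q : Bool × Fin 3,
      (pauli α * (pauli β * eigState q * pauli β)).trace * (pauli α * eigState q).trace
      = 6 * coef α β := by
  rw [Fintype.sum_prod_type, Fintype.sum_bool]
  fin_cases α <;> fin_cases β <;>
  · simp only [Fin.sum_univ_three, eig_true, eig_false, coef, Fin.isValue]
    norm_num [show (0:Fin 3).succ = 1 from rfl, show (1:Fin 3).succ = 2 from rfl,
      show (2:Fin 3).succ = 3 from rfl, pauli_zero, pauli_one, pauli_two, pauli_three,
      pauli_mk0, pauli_mk1, pauli_mk2, pauli_mk3,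
      Matrix.mul_add, Matrix.add_mul, Matrix.mul_smul, Matrix.smul_mul, smul_smul,
      Matrix.trace_add, Matrix.trace_smul, Matrix.mul_fin_two, Matrix.trace_fin_two,
      Matrix.smul_of, Matrix.of_apply, Matrix.cons_val', Matrix.cons_val_zero,
      Matrix.cons_val_one, Matrix.head_cons, Matrix.head_fin_const, Matrix.empty_val',
      Matrix.cons_val_fin_one, Fin.ext_iff, Complex.ext_iff]

def kron {n : ℕ} (M : Fin n → Matrix (Fin 2) (Fin 2) ℂ) :
    Matrix (Fin n → Fin 2) (Fin n → Fin 2) ℂ :=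
  fun i k => ∏ j, M j (i j) (k j)

lemma PauliString_eq_kron {n : ℕ} (a : Fin n → Fin 4) :
    PauliString a = kron (fun j => pauli (a j)) := rfl

lemma prodEigState_eq_kron {n : ℕ} (f : Fin n → Bool × Fin 3) :
    prodEigState f = kron (fun j => eigState (f j)) := rfl

lemma kron_mul {n : ℕ} (M N : Fin n → Matrix (Fin 2) (Fin 2) ℂ) :
    kron M * kron N = kron fun j => M j * N j := by
  funext i k
  have h : ∀ j : Fin n, (M j * N j) (i j) (k j) = ∑ x : Fin 2, M j (i j) x * N j x (k j) :=
    fun j => Matrix.mul_apply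
  calc (kron M * kron N) i k
      = ∑ m : Fin n → Fin 2, (∏ j, M j (i j) (m j)) * ∏ j, N j (m j) (k j) :=
        Matrix.mul_apply
    _ = ∑ m : Fin n → Fin 2, ∏ j, (M j (i j) (m j) * N j (m j) (k j)) := by
        simp [Finset.prod_mul_distrib]
    _ = ∏ j, ∑ x : Fin 2, M j (i j) x * N j x (k j) := by
        rw [Finset.prod_univ_sum, Fintype.piFinset_univ]
    _ = ∏ j, (M j * N j) (i j) (k j) := Finset.prod_congr rfl fun j _ => (h j).symm

lemma kron_trace {n : ℕ} (M : Fin n → Matrix (Fin 2) (Fin 2) ℂ) :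
    (kron M).trace = ∏ j, (M j).trace := by
  have h : ∀ j, (M j).trace = ∑ x : Fin 2, M j x x := fun j => rfl
  simp only [Matrix.trace, Matrix.diag, h, kron]
  rw [Finset.prod_univ_sum, Fintype.piFinset_univ]

lemma sum_fun_prod {n : ℕ} {κ : Type*} [Fintype κ] (F : Fin n → κ → ℂ) :
    ∑ f : Fin n → κ, ∏ j, F j (f j) = ∏ j, ∑ q, F j q := by
  rw [Finset.prod_univ_sum, Fintype.piFinset_univ]

lemma myprod_ite_one {n : ℕ} (P : Fin n → Prop) [DecidablePred P] (c : ℂ) :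
    ∏ j, (if P j then 1 else c) = c ^ (Finset.univ.filter fun j => ¬ P j).card := by
  rw [← Finset.prod_filter_mul_prod_filter_not Finset.univ P]
  rw [Finset.prod_ite_of_true (by simp), Finset.prod_ite_of_false (by simp)]
  simp [Finset.prod_const]

lemma myprod_ite_neg_one {n : ℕ} (Q : Fin n → Prop) [DecidablePred Q] :
    ∏ j, (if Q j then (-1 : ℂ) else 1) = (-1) ^ (Finset.univ.filter fun j => Q j).card := by
  rw [← Finset.prod_filter_mul_prod_filter_not Finset.univ Q]
  rw [Finset.prod_ite_of_true (by simp), Finset.prod_ite_of_false (by simp)]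
  simp [Finset.prod_const]

/-- Lemma 1: the classical-shadow average recovers the Pauli eigenvalue
`λ_a = ∑_b (-1)^⟨a,b⟩ p b`, scaled by `(1/3)^|a|`. -/
theorem pauli_eigenvalue_estimation {n : ℕ} (p : (Fin n → Fin 4) → ℝ)
    (hp : ∀ b, 0 ≤ p b) (hsum : ∑ b, p b = 1) (a : Fin n → Fin 4) :
    ((6 : ℂ) ^ n)⁻¹ * ∑ f : Fin n → Bool × Fin 3,
        (PauliString a *
          ∑ b, p b • (PauliString b * prodEigState f * PauliString b)).trace
          * (PauliString a * prodEigState f).trace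
      = ((1 / 3 : ℂ) ^ pweight a) *
          ((∑ b, (-1 : ℝ) ^ ppair a b * p b : ℝ) : ℂ) := by
  have hT1 : ∀ (b : Fin n → Fin 4) (f : Fin n → Bool × Fin 3),
      (PauliString a * (PauliString b * prodEigState f * PauliString b)).trace
        = ∏ j, (pauli (a j) * (pauli (b j) * eigState (f j) * pauli (b j))).trace := by
    intro b f
    rw [PauliString_eq_kron, PauliString_eq_kron, prodEigState_eq_kron,
      kron_mul, kron_mul, kron_mul, kron_trace]
  have hT2 : ∀ (f : Fin n → Bool × Fin 3),
      (PauliString a * prodEigState f).trace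
        = ∏ j, (pauli (a j) * eigState (f j)).trace := by
    intro f
    rw [PauliString_eq_kron, prodEigState_eq_kron, kron_mul, kron_trace]
  have key : ∑ f : Fin n → Bool × Fin 3,
        (PauliString a *
          ∑ b, p b • (PauliString b * prodEigState f * PauliString b)).trace
          * (PauliString a * prodEigState f).trace
      = ∑ b, (p b : ℂ) * ∏ j, (6 * coef (a j) (b j)) := by
    have h0 : ∀ f : Fin n → Bool × Fin 3,
        (PauliString a *
          ∑ b, p b • (PauliString b * prodEigState f * PauliString b)).trace
          * (PauliString a * prodEigState f).trace
        = ∑ b, (p b : ℂ) *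
            ∏ j, ((pauli (a j) * (pauli (b j) * eigState (f j) * pauli (b j))).trace
              * (pauli (a j) * eigState (f j)).trace) := by
      intro f
      rw [Matrix.mul_sum, Matrix.trace_sum, Finset.sum_mul]
      refine Finset.sum_congr rfl fun b _ => ?_
      rw [Matrix.mul_smul, Matrix.trace_smul, smul_mul_assoc, hT1, hT2,
        ← Finset.prod_mul_distrib, Complex.real_smul]
    rw [Finset.sum_congr rfl fun f _ => h0 f, Finset.sum_comm]
    refine Finset.sum_congr rfl fun b _ => ?_
    rw [← Finset.mul_sum,
      sum_fun_prod (fun j q => (pauli (a j) * (pauli (b j) * eigState q * pauli (b j))).trace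
        * (pauli (a j) * eigState q).trace)]
    exact congrArg _ (Finset.prod_congr rfl fun j _ => single (a j) (b j))
  rw [key]
  have h6 : ((6 : ℂ) ^ n) ≠ 0 := pow_ne_zero _ (by norm_num)
  have hprod : ∀ b, ∏ j, (6 * coef (a j) (b j))
      = 6 ^ n * ((1/3 : ℂ) ^ pweight a * (-1) ^ ppair a b) := by
    intro b
    rw [Finset.prod_mul_distrib, Finset.prod_const, Finset.card_univ, Fintype.card_fin]
    congr 1
    rw [show (fun j => coef (a j) (b j)) = fun j =>
        (if a j = 0 then 1 else (1/3 : ℂ)) *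
          (if a j ≠ 0 ∧ b j ≠ 0 ∧ a j ≠ b j then -1 else 1) from rfl]
    rw [Finset.prod_mul_distrib, myprod_ite_one, myprod_ite_neg_one]
    rw [pweight, ppair, ← neg_one_pow_eq_pow_mod_two]
  have step : ∑ b, (p b : ℂ) * ∏ j, (6 * coef (a j) (b j))
      = 6 ^ n * ∑ b, (p b : ℂ) * ((1/3 : ℂ) ^ pweight a * (-1) ^ ppair a b) := by
    rw [Finset.mul_sum]
    exact Finset.sum_congr rfl fun b _ => by rw [hprod b]; ring
  rw [step, ← mul_assoc, inv_mul_cancel₀ h6, one_mul]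
  push_cast
  rw [Finset.mul_sum]
  exact Finset.sum_congr rfl fun b _ => by ring
end
end

section
/- For every Pauli string P_a on n qubits, the uniform average over the 6^n n-fold product Pauli eigenstates ρ satisfies 6^{-n} ∑_ρ (tr(P_a * ρ))² = (1/3)^{|a|}, where |a| is the number of indices j with a j ≠ 0. -/
open Matrix Finset

noncomputable section

lemma trace_pauli (b : Fin 4) : (pauli b).trace = if b = 0 then 2 else 0 := by
  fin_cases b <;> simp [pauli, trace_fin_two, Matrix.one_fin_two] <;> norm_num

lemma trace_pauli_mul (b c : Fin 4) :
    (pauli b * pauli c).trace = if b = c then 2 else 0 := by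
  fin_cases b <;> fin_cases c <;>
    simp [pauli, Matrix.one_fin_two, Matrix.mul_fin_two, trace_fin_two,
      Complex.I_mul_I] <;> ring_nf

lemma trace_pauli_eig (b : Fin 4) (q : Bool × Fin 3) :
    (pauli b * eigState q).trace
      = 2⁻¹ * ((if b = 0 then 2 else 0)
        + (if q.1 then (1:ℂ) else -1) * (if b = q.2.succ then 2 else 0)) := by
  obtain ⟨s, c⟩ := q
  cases s <;>
    simp [eigState, Matrix.mul_smul, Matrix.mul_add, trace_add, trace_smul,
      smul_eq_mul, trace_pauli, trace_pauli_mul, mul_one] <;>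
    split_ifs <;> norm_num

lemma site_sum (b : Fin 4) :
    ∑ q : Bool × Fin 3, (pauli b * eigState q).trace ^ 2
      = if b = 0 then 6 else 2 := by
  fin_cases b <;>
    rw [Fintype.sum_prod_type] <;>
    simp only [Fintype.sum_bool, Fin.sum_univ_succ, Fin.sum_univ_zero,
      trace_pauli_eig] <;>
    norm_num [Fin.ext_iff, Fin.succ]

lemma sum_prod_swap {n : ℕ} {α : Type*} [Fintype α] (g : Fin n → α → ℂ) :
    ∑ k : Fin n → α, ∏ j, g j (k j) = ∏ j, ∑ y, g j y := by
  classical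
  rw [Finset.prod_univ_sum]
  exact Finset.sum_congr (by simp) fun _ _ => rfl

set_option maxHeartbeats 1000000 in
lemma trace_factor {n : ℕ} (a : Fin n → Fin 4) (f : Fin n → Bool × Fin 3) :
    (PauliString a * prodEigState f).trace
      = ∏ j, (pauli (a j) * eigState (f j)).trace := by
  classical
  have h1 : (PauliString a * prodEigState f).trace
      = ∑ i : Fin n → Fin 2, ∑ k : Fin n → Fin 2,
          ∏ j, pauli (a j) (i j) (k j) * eigState (f j) (k j) (i j) := by
    simp only [Matrix.trace, Matrix.diag, Matrix.mul_apply, PauliString,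
      prodEigState, ← Finset.prod_mul_distrib]
  rw [h1]
  have h2 : ∀ i : Fin n → Fin 2,
      ∑ k : Fin n → Fin 2, ∏ j, pauli (a j) (i j) (k j) * eigState (f j) (k j) (i j)
        = ∏ j, ∑ y, pauli (a j) (i j) y * eigState (f j) y (i j) :=
    fun i => sum_prod_swap (fun j y => pauli (a j) (i j) y * eigState (f j) y (i j))
  simp only [h2]
  rw [sum_prod_swap (fun j x => ∑ y, pauli (a j) x y * eigState (f j) y x)]
  exact Finset.prod_congr rfl fun j _ => by
    simp [Matrix.trace, Matrix.diag, Matrix.mul_apply]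

set_option maxHeartbeats 1000000 in
/-- The second moment of `tr(P_a ρ)` over random product Pauli eigenstates is `(1/3)^|a|`. -/
theorem pauli_second_moment {n : ℕ} (a : Fin n → Fin 4) :
    ((6 : ℂ) ^ n)⁻¹ * ∑ f : Fin n → Bool × Fin 3,
        ((PauliString a * prodEigState f).trace) ^ 2
      = (1 / 3 : ℂ) ^ pweight a := by
  classical
  have hsum : ∑ f : Fin n → Bool × Fin 3, ((PauliString a * prodEigState f).trace) ^ 2
      = ∏ j, (if a j = 0 then (6:ℂ) else 2) := by
    calc ∑ f : Fin n → Bool × Fin 3, ((PauliString a * prodEigState f).trace) ^ 2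
        = ∑ f : Fin n → Bool × Fin 3, ∏ j, (pauli (a j) * eigState (f j)).trace ^ 2 := by
          simp only [trace_factor, ← Finset.prod_pow]
      _ = ∏ j, ∑ q : Bool × Fin 3, (pauli (a j) * eigState q).trace ^ 2 :=
          sum_prod_swap (fun j q => (pauli (a j) * eigState q).trace ^ 2)
      _ = ∏ j, (if a j = 0 then (6:ℂ) else 2) :=
          Finset.prod_congr rfl fun j _ => site_sum (a j)
  rw [hsum]
  have h6 : ((6:ℂ) ^ n)⁻¹ = ∏ _j : Fin n, (6:ℂ)⁻¹ := by
    simp [Finset.prod_const]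
  rw [h6, ← Finset.prod_mul_distrib]
  have : ∀ j, (6:ℂ)⁻¹ * (if a j = 0 then (6:ℂ) else 2) = if a j = 0 then 1 else (1/3 : ℂ) := by
    intro j; split_ifs <;> norm_num
  simp only [this]
  rw [Finset.prod_ite, Finset.prod_const, Finset.prod_const, one_pow, one_mul, pweight]
end
end

section
/- (Rigorous non-asymptotic form of the error analysis in the proof of Theorem 1.) Let 𝒫 be a linear map on 2^n × 2^n complex matrices with 𝒫(P_a) = λ_a • P_a for every string a, where λ : (Fin n → Fin 4) → ℝ. Let σ be a density matrix (positive semidefinite with trace 1), let k ≤ n, and let α : (Fin n → Fin 4) → ℝ satisfy α_a = 0 whenever |a| > k; set O = ∑_a α_a • P_a. Let λ̂ : (Fin n → Fin 4) → ℝ and reals ε̃ ≥ 0 and λmin > ε̃ be such that for all a with |a| ≤ k: |λ̂_a − λ_a| ≤ ε̃ and |λ_a| ≥ λmin. Define ⃖O = ∑_{a : |a| ≤ k} (α_a / λ̂_a) • P_a. Then |tr(𝒫(⃖O) * σ) − tr(O * σ)| ≤ (ε̃ / (λmin − ε̃)) · ∑_a |α_a|. -/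
/-! Since `𝒫` acts diagonally on Pauli strings, `𝒫(⃖O) - O = ∑_{|a| ≤ k} (α_a λ_a / λ̂_a - α_a) P_a`.
Each coefficient is at most `ε̃ / (λmin - ε̃) · |α_a|` because `|λ̂_a| ≥ λmin - ε̃ > 0`, and each
expectation satisfies `|tr(P_a σ)| ≤ 1`: a Pauli string `P` is a Hermitian involution, so
`(1 ± P)² = 2 (1 ± P)` and positivity of `(1 ± P) σ (1 ± P)` gives `tr σ ± tr(P σ) ≥ 0`. -/

open Matrix Finset

noncomputable section

open scoped ComplexOrder

namespace Matrix

section piKron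

variable {ι m n p R : Type*} [Fintype ι]

def piKron [CommSemiring R] (A : ι → Matrix m n R) : Matrix (ι → m) (ι → n) R :=
  fun i k => ∏ j, A j (i j) (k j)

theorem piKron_mul [CommSemiring R] [Fintype n] [DecidableEq ι] (A : ι → Matrix m n R)
    (B : ι → Matrix n p R) : piKron A * piKron B = piKron fun j => A j * B j := by
  ext i k
  simp only [piKron, mul_apply, Fintype.prod_sum, Finset.prod_mul_distrib]

theorem piKron_one [CommSemiring R] [DecidableEq m] :
    piKron (fun _ : ι => (1 : Matrix m m R)) = 1 := by
  ext i k
  simp [piKron, one_apply, Fintype.prod_boole, funext_iff]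

theorem conjTranspose_piKron [CommSemiring R] [StarRing R] (A : ι → Matrix m n R) :
    (piKron A)ᴴ = piKron fun j => (A j)ᴴ := by
  ext i k
  simp [piKron, star_prod]

theorem IsHermitian.piKron [CommSemiring R] [StarRing R] {A : ι → Matrix m m R}
    (hA : ∀ j, (A j).IsHermitian) : (piKron A).IsHermitian := by
  simp only [IsHermitian, conjTranspose_piKron, fun j => (hA j).eq]

end piKron

variable {m : Type*} [Fintype m] [DecidableEq m]

theorem trace_add_trace_mul_nonneg {P σ : Matrix m m ℂ} (hP : P.IsHermitian) (hP2 : P * P = 1)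
    (hσ : σ.PosSemidef) : 0 ≤ σ.trace + (P * σ).trace := by
  have h := (hσ.mul_mul_conjTranspose_same (1 + P)).trace_nonneg
  have hsq : (1 + P) * (1 + P) = (2 : ℝ) • (1 + P) := by
    simp only [add_mul, mul_add, one_mul, mul_one, hP2, smul_add, two_smul]; abel
  rw [conjTranspose_add, conjTranspose_one, hP.eq, trace_mul_cycle, hsq, smul_mul_assoc,
    trace_smul, add_mul, one_mul, trace_add] at h
  exact (smul_nonneg_iff_nonneg_of_pos_left two_pos).1 h

theorem norm_trace_mul_le_of_isHermitian_of_mul_self_eq_one {P σ : Matrix m m ℂ}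
    (hP : P.IsHermitian) (hP2 : P * P = 1) (hσ : σ.PosSemidef) :
    ‖(P * σ).trace‖ ≤ σ.trace.re := by
  have hplus := Complex.le_def.1 (trace_add_trace_mul_nonneg hP hP2 hσ)
  have hminus := Complex.le_def.1 (trace_add_trace_mul_nonneg hP.neg (by simpa using hP2) hσ)
  simp only [Complex.zero_re, Complex.zero_im, Complex.add_re, Complex.add_im, neg_mul,
    trace_neg, Complex.neg_re, Complex.neg_im] at hplus hminus
  rw [← Complex.re_add_im (P * σ).trace, show (P * σ).trace.im = 0 by linarith,
    Complex.ofReal_zero, zero_mul, add_zero, Complex.norm_real, Real.norm_eq_abs, abs_le]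
  constructor <;> linarith

theorem norm_trace_sum_smul_mul_le {ι : Type*} (s : Finset ι) (c : ι → ℝ)
    (P : ι → Matrix m m ℂ) (σ : Matrix m m ℂ) (hP : ∀ i ∈ s, ‖(P i * σ).trace‖ ≤ 1) :
    ‖((∑ i ∈ s, c i • P i) * σ).trace‖ ≤ ∑ i ∈ s, |c i| := by
  rw [Finset.sum_mul, trace_sum]
  refine (norm_sum_le _ _).trans (Finset.sum_le_sum fun i hi => ?_)
  rw [smul_mul_assoc, trace_smul, norm_smul, Real.norm_eq_abs]
  exact mul_le_of_le_one_right (abs_nonneg _) (hP i hi)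

end Matrix

theorem pauli_isHermitian (t : Fin 4) : (pauli t).IsHermitian := by
  fin_cases t <;> ext i j <;> fin_cases i <;> fin_cases j <;> simp [pauli]

theorem pauli_mul_self (t : Fin 4) : pauli t * pauli t = 1 := by
  fin_cases t <;> ext i j <;> fin_cases i <;> fin_cases j <;>
    simp [pauli, mul_apply, Fin.sum_univ_two, one_apply]

theorem pauliString_eq_piKron {n : ℕ} (a : Fin n → Fin 4) :
    PauliString a = piKron fun j => pauli (a j) := rfl

theorem pauliString_isHermitian {n : ℕ} (a : Fin n → Fin 4) : (PauliString a).IsHermitian :=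
  IsHermitian.piKron fun j => pauli_isHermitian (a j)

theorem pauliString_mul_self {n : ℕ} (a : Fin n → Fin 4) : PauliString a * PauliString a = 1 := by
  simp only [pauliString_eq_piKron, piKron_mul, pauli_mul_self, piKron_one]

theorem norm_trace_pauliString_mul_le_one {n : ℕ} (a : Fin n → Fin 4)
    {σ : Matrix (Fin n → Fin 2) (Fin n → Fin 2) ℂ} (hσ : σ.PosSemidef) (htr : σ.trace = 1) :
    ‖(PauliString a * σ).trace‖ ≤ 1 := by
  simpa [htr] using
    norm_trace_mul_le_of_isHermitian_of_mul_self_eq_one (pauliString_isHermitian a)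
      (pauliString_mul_self a) hσ

theorem abs_div_mul_sub_le {x l lhat ε lmin : ℝ} (hmin : ε < lmin) (hclose : |lhat - l| ≤ ε)
    (hlb : lmin ≤ |l|) : |x / lhat * l - x| ≤ ε / (lmin - ε) * |x| := by
  have hgap : 0 < lmin - ε := sub_pos.2 hmin
  have hlhat : lmin - ε ≤ |lhat| := by
    linarith [abs_sub_abs_le_abs_sub l lhat, abs_sub_comm lhat l]
  have hne : lhat ≠ 0 := abs_pos.1 (hgap.trans_le hlhat)
  calc |x / lhat * l - x| = |x| * |l - lhat| / |lhat| := by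
        rw [← abs_mul, ← abs_div]; congr 1; field_simp
    _ ≤ |x| * ε / (lmin - ε) := by
        have hε : 0 ≤ ε := (abs_nonneg _).trans hclose
        gcongr
        rwa [abs_sub_comm]
    _ = ε / (lmin - ε) * |x| := by ring

theorem information_recovery_error_bound_general {n k : ℕ}
    (Pch : Matrix (Fin n → Fin 2) (Fin n → Fin 2) ℂ →ₗ[ℂ]
          Matrix (Fin n → Fin 2) (Fin n → Fin 2) ℂ)
    (lam : (Fin n → Fin 4) → ℝ)
    (hP : ∀ a, Pch (PauliString a) = lam a • PauliString a)
    (σ : Matrix (Fin n → Fin 2) (Fin n → Fin 2) ℂ)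
    (hσ : σ.PosSemidef) (htr : σ.trace = 1)
    (α : (Fin n → Fin 4) → ℝ) (hα : ∀ a, k < pweight a → α a = 0)
    (lamhat : (Fin n → Fin 4) → ℝ) (ε lammin : ℝ)
    (hmin : ε < lammin)
    (hclose : ∀ a, pweight a ≤ k → |lamhat a - lam a| ≤ ε)
    (hlb : ∀ a, pweight a ≤ k → lammin ≤ |lam a|) :
    ‖((Pch (∑ a ∈ Finset.univ.filter fun a => pweight a ≤ k,
            (α a / lamhat a) • PauliString a) * σ).trace
          - ((∑ a, α a • PauliString a) * σ).trace)‖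
      ≤ ε / (lammin - ε) * ∑ a, |α a| := by
  set S := Finset.univ.filter fun a : Fin n → Fin 4 => pweight a ≤ k
  have hsupp : ∀ a, α a ≠ 0 → pweight a ≤ k := fun a ha => not_lt.1 (mt (hα a) ha)
  have hO : ∑ a, α a • PauliString a = ∑ a ∈ S, α a • PauliString a :=
    (sum_filter_of_ne fun a _ ha => hsupp a (left_ne_zero_of_smul ha)).symm
  have hnorm : ∑ a, |α a| = ∑ a ∈ S, |α a| :=
    (sum_filter_of_ne fun a _ ha => hsupp a (abs_ne_zero.1 ha)).symm
  have hdiff : Pch (∑ a ∈ S, (α a / lamhat a) • PauliString a) - ∑ a ∈ S, α a • PauliString a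
      = ∑ a ∈ S, (α a / lamhat a * lam a - α a) • PauliString a := by
    rw [map_sum, ← sum_sub_distrib]
    refine sum_congr rfl fun a _ => ?_
    rw [LinearMap.map_smul_of_tower, hP, smul_smul, sub_smul]
  rw [← trace_sub, ← sub_mul, hO, hdiff, hnorm, mul_sum]
  refine (norm_trace_sum_smul_mul_le S _ _ σ fun a _ =>
    norm_trace_pauliString_mul_le_one a hσ htr).trans (sum_le_sum fun a ha => ?_)
  have hak := (mem_filter.1 ha).2
  exact abs_div_mul_sub_le hmin (hclose a hak) (hlb a hak)

/-- Non-asymptotic error analysis in the proof of Theorem 1: dividing the Pauli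
coefficients of a bounded-degree `k`-local observable by approximate channel eigenvalues
recovers the ideal expectation value up to `ε̃/(λmin − ε̃) · ‖α‖₁`. -/
theorem information_recovery_error_bound {n k : ℕ} (hk : k ≤ n)
    (Pch : Matrix (Fin n → Fin 2) (Fin n → Fin 2) ℂ →ₗ[ℂ]
          Matrix (Fin n → Fin 2) (Fin n → Fin 2) ℂ)
    (lam : (Fin n → Fin 4) → ℝ)
    (hP : ∀ a, Pch (PauliString a) = lam a • PauliString a)
    (σ : Matrix (Fin n → Fin 2) (Fin n → Fin 2) ℂ)
    (hσ : σ.PosSemidef) (htr : σ.trace = 1)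
    (α : (Fin n → Fin 4) → ℝ) (hα : ∀ a, k < pweight a → α a = 0)
    (lamhat : (Fin n → Fin 4) → ℝ) (ε lammin : ℝ)
    (hε : 0 ≤ ε) (hmin : ε < lammin)
    (hclose : ∀ a, pweight a ≤ k → |lamhat a - lam a| ≤ ε)
    (hlb : ∀ a, pweight a ≤ k → lammin ≤ |lam a|) :
    ‖((Pch (∑ a ∈ Finset.univ.filter fun a => pweight a ≤ k,
            (α a / lamhat a) • PauliString a) * σ).trace
          - ((∑ a, α a • PauliString a) * σ).trace)‖
      ≤ ε / (lammin - ε) * ∑ a, |α a| :=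
  information_recovery_error_bound_general Pch lam hP σ hσ htr α hα lamhat ε lammin hmin hclose hlb
end
end

section
/- (Haar twirl formula, stated and used in Appendix D.) Let d ≥ 2 and let μ be the Haar probability measure on the unitary group U(d) of d × d complex matrices. Let F be the swap matrix on ℂ^d ⊗ ℂ^d, i.e. the d² × d² matrix indexed by pairs with F_{(i,j),(k,l)} = 1 if i = l and j = k, and 0 otherwise. Then for every d² × d² complex matrix M: ∫ (U ⊗ U) * M * (U ⊗ U)† dμ(U) = (tr M/(d²−1) − tr(M*F)/(d(d²−1))) • 1 + (tr(M*F)/(d²−1) − tr M/(d(d²−1))) • F, where U ⊗ U is the Kronecker product, 1 is the d² × d² identity, and U† is the conjugate transpose. -/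
open Matrix MeasureTheory
open scoped Kronecker

noncomputable section

noncomputable instance matrixMeasurableSpace {m k : Type*} :
    MeasurableSpace (Matrix m k ℂ) := borel _

instance matrixBorelSpace {m k : Type*} : BorelSpace (Matrix m k ℂ) := ⟨rfl⟩

/-- The swap matrix `F` on `ℂ^d ⊗ ℂ^d`: `F_{(i,j),(k,l)} = 1` iff `i = l` and `j = k`. -/
def swapMatrix (d : ℕ) : Matrix (Fin d × Fin d) (Fin d × Fin d) ℂ :=
  fun p q => if p.1 = q.2 ∧ p.2 = q.1 then 1 else 0

/-! Left invariance of `μ` makes the twirl `T(M) = ∫ (U ⊗ U) M (U ⊗ U)ᴴ dμ` commute with every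
`V ⊗ V`, and cyclicity of the trace gives `tr (T(M) S) = tr (M S)` for every `S` in that
commutant, in particular for `S = 1` and `S = F`. Testing commutation against diagonal phase
matrices and permutation matrices shows that a matrix commuting with all `V ⊗ V` has the form
`a 1 + b F + e E`, where `E` is the projection onto the span of the `eᵢ ⊗ eᵢ`; one Householder
reflection mixing two basis vectors forces `e = 0`. The coefficients `a`, `b` are then read off
from the two traces, using `tr 1 = d²`, `tr F = d` and `F² = 1`. -/

theorem Complex.I_pow_inj {a b : ℕ} (ha : a ≤ 2) (hb : b ≤ 2) (h : I ^ a = I ^ b) : a = b := by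
  interval_cases a <;> interval_cases b <;> simp_all [pow_succ, Complex.ext_iff] <;> norm_num at h

theorem Prod.eq_or_eq_swap_of_count_eq {α : Type*} [DecidableEq α] {p q : α × α}
    (h : ∀ m, (if q.1 = m then 1 else 0) + (if q.2 = m then 1 else 0) =
      (if p.1 = m then 1 else 0) + (if p.2 = m then (1 : ℕ) else 0)) :
    q = p ∨ q = p.swap := by
  obtain ⟨i, j⟩ := p
  obtain ⟨k, l⟩ := q
  have hk := h k
  have hl := h l
  simp only [Prod.mk.injEq, Prod.swap_prod_mk]
  split_ifs at hk hl <;> subst_vars <;> simp_all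

theorem Equiv.Perm.exists_apply_eq_apply_eq {α : Type*} [DecidableEq α] {a b c e : α}
    (hab : a ≠ b) (hce : c ≠ e) : ∃ σ : Equiv.Perm α, σ a = c ∧ σ b = e := by
  refine ⟨(Equiv.swap a c).trans (Equiv.swap (Equiv.swap a c b) e), ?_, by simp⟩
  have hb : Equiv.swap a c b ≠ c := by
    rw [Ne, Equiv.swap_apply_eq_iff, Equiv.swap_apply_right]
    exact hab.symm
  simp [Equiv.swap_apply_of_ne_of_ne hb.symm hce]

@[fun_prop]
theorem Continuous.matrix_kronecker {X R l m n p : Type*} [TopologicalSpace X] [TopologicalSpace R]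
    [Mul R] [ContinuousMul R] {A : X → Matrix l m R} {B : X → Matrix n p R}
    (hA : Continuous A) (hB : Continuous B) : Continuous fun x => A x ⊗ₖ B x :=
  continuous_pi fun _ => continuous_pi fun _ => (hA.matrix_elem _ _).mul (hB.matrix_elem _ _)

theorem Matrix.trace_mul_mul_mul_eq_of_commute {m R : Type*} [Fintype m] [DecidableEq m]
    [CommSemiring R] {A B M S : Matrix m m R} (hBA : B * A = 1) (hS : Commute S B) :
    trace (A * M * B * S) = trace (M * S) := by
  calc trace (A * M * B * S) = trace (B * (A * (M * S))) := by
        rw [Matrix.mul_assoc, ← hS.eq, ← Matrix.mul_assoc, trace_mul_comm]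
        simp only [Matrix.mul_assoc]
    _ = trace (M * S) := by rw [← Matrix.mul_assoc, hBA, Matrix.one_mul]

theorem Equiv.Perm.permMatrix_kronecker_permMatrix {n α : Type*} [DecidableEq n] [MulZeroOneClass α]
    (σ : Equiv.Perm n) :
    σ.permMatrix α ⊗ₖ σ.permMatrix α = Equiv.Perm.permMatrix α (σ.prodCongr σ) := by
  ext p q
  simp only [kroneckerMap_apply, PEquiv.toMatrix_apply, Equiv.toPEquiv_apply, Option.mem_def,
    Option.some.injEq, Equiv.prodCongr_apply, Prod.ext_iff, Prod.map_fst, Prod.map_snd,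
    ite_zero_mul_ite_zero, one_mul]

section UnitaryGroup

variable {n α : Type*} [Fintype n] [DecidableEq n]

instance Matrix.unitaryGroup.compactSpace {𝕜 : Type*} [RCLike 𝕜] :
    CompactSpace (unitaryGroup n 𝕜) := by
  refine isCompact_iff_compactSpace.mp <| IsCompact.of_isClosed_subset
    (isCompact_univ_pi fun _ => isCompact_univ_pi fun _ => isCompact_closedBall (0 : 𝕜) 1)
    isClosed_unitary fun U hU i _ j _ => ?_
  simpa using entry_norm_bound_of_unitary hU i j

variable [CommRing α] [StarRing α]

theorem Matrix.diagonal_mem_unitaryGroup {w : n → α} (hw : ∀ i, star (w i) * w i = 1) :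
    diagonal w ∈ unitaryGroup n α := by
  rw [mem_unitaryGroup_iff', star_eq_conjTranspose, diagonal_conjTranspose,
    diagonal_mul_diagonal, ← diagonal_one]
  exact congrArg diagonal (funext hw)

theorem Equiv.Perm.permMatrix_mem_unitaryGroup (σ : Equiv.Perm n) :
    σ.permMatrix α ∈ unitaryGroup n α := by
  rw [mem_unitaryGroup_iff', star_eq_conjTranspose, conjTranspose_permMatrix, ← permMatrix_mul,
    mul_inv_cancel, permMatrix_one]

theorem householder_mem_unitaryGroup {v : n → α} (hv : star v ⬝ᵥ v = 1) :
    1 - (2 : α) • vecMulVec v (star v) ∈ unitaryGroup n α := by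
  rw [mem_unitaryGroup_iff', star_eq_conjTranspose, conjTranspose_sub, conjTranspose_one,
    conjTranspose_smul, conjTranspose_vecMulVec, star_star]
  simp only [sub_mul, mul_sub, smul_mul_smul_comm, vecMulVec_mul_vecMulVec, hv, one_smul,
    Matrix.mul_one, Matrix.one_mul, star_ofNat]
  module

end UnitaryGroup

section EntrywiseIntegral

variable {α l m n o : Type*} [MeasurableSpace α] {μ : Measure α}

def entrywiseIntegral (μ : Measure α) (f : α → Matrix m n ℂ) : Matrix m n ℂ :=
  of fun i j => ∫ x, f x i j ∂μ

theorem integrable_apply_of_continuous [TopologicalSpace α] [OpensMeasurableSpace α]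
    [CompactSpace α] [IsFiniteMeasure μ] {f : α → Matrix m n ℂ} (hf : Continuous f) (i : m)
    (j : n) : Integrable (fun x => f x i j) μ :=
  (hf.matrix_elem i j).integrable_of_hasCompactSupport (.of_compactSpace _)

variable [Fintype m] [Fintype n]

theorem mul_entrywiseIntegral_mul {f : α → Matrix m n ℂ}
    (hf : ∀ i j, Integrable (fun x => f x i j) μ) (A : Matrix l m ℂ) (B : Matrix n o ℂ) :
    A * entrywiseIntegral μ f * B = entrywiseIntegral μ fun x => A * f x * B := by
  ext p q
  simp only [entrywiseIntegral, of_apply, mul_apply, Finset.sum_mul]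
  rw [integral_finsetSum _ fun s _ =>
    integrable_finsetSum _ fun r _ => ((hf r s).const_mul _).mul_const _]
  refine Finset.sum_congr rfl fun s _ => ?_
  rw [integral_finsetSum _ fun r _ => ((hf r s).const_mul _).mul_const _]
  simp_rw [integral_mul_const, integral_const_mul]

theorem trace_entrywiseIntegral {f : α → Matrix n n ℂ}
    (hf : ∀ i j, Integrable (fun x => f x i j) μ) :
    trace (entrywiseIntegral μ f) = ∫ x, trace (f x) ∂μ :=
  (integral_finsetSum _ fun i _ => hf i i).symm

end EntrywiseIntegral

section Twirl

variable {n : Type*} [Fintype n] [DecidableEq n]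

def twirl (μ : Measure (unitaryGroup n ℂ)) (M : Matrix (n × n) (n × n) ℂ) :
    Matrix (n × n) (n × n) ℂ :=
  entrywiseIntegral μ fun U =>
    ((U : Matrix n n ℂ) ⊗ₖ (U : Matrix n n ℂ)) * M * ((U : Matrix n n ℂ) ⊗ₖ (U : Matrix n n ℂ))ᴴ

theorem kronecker_self_conjTranspose_mul_self {U : Matrix n n ℂ} (hU : U ∈ unitaryGroup n ℂ) :
    (U ⊗ₖ U)ᴴ * (U ⊗ₖ U) = 1 :=
  (kronecker_mem_unitary hU hU).1

variable (μ : Measure (unitaryGroup n ℂ)) [IsProbabilityMeasure μ] (M : Matrix (n × n) (n × n) ℂ)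

theorem integrable_twirl_integrand (p q : n × n) :
    Integrable (fun U : unitaryGroup n ℂ =>
      (((U : Matrix n n ℂ) ⊗ₖ (U : Matrix n n ℂ)) * M *
        ((U : Matrix n n ℂ) ⊗ₖ (U : Matrix n n ℂ))ᴴ) p q) μ :=
  integrable_apply_of_continuous (by fun_prop) p q

theorem twirl_commute_kronecker_self [μ.IsMulLeftInvariant] {V : Matrix n n ℂ}
    (hV : V ∈ unitaryGroup n ℂ) : Commute (twirl μ M) (V ⊗ₖ V) := by
  have hconj : (V ⊗ₖ V) * twirl μ M * (V ⊗ₖ V)ᴴ = twirl μ M := by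
    rw [twirl, mul_entrywiseIntegral_mul (integrable_twirl_integrand μ M)]
    ext p q
    refine Eq.trans ?_ (integral_mul_left_eq_self (μ := μ) _ ⟨V, hV⟩)
    simp only [entrywiseIntegral, of_apply, Submonoid.coe_mul, mul_kronecker_mul,
      conjTranspose_mul, Matrix.mul_assoc]
  calc twirl μ M * (V ⊗ₖ V) = (V ⊗ₖ V) * twirl μ M * ((V ⊗ₖ V)ᴴ * (V ⊗ₖ V)) := by
        rw [← Matrix.mul_assoc, hconj]
    _ = (V ⊗ₖ V) * twirl μ M := by
        rw [kronecker_self_conjTranspose_mul_self hV, Matrix.mul_one]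

theorem trace_twirl_mul {S : Matrix (n × n) (n × n) ℂ}
    (hS : ∀ U ∈ unitaryGroup n ℂ, Commute S (U ⊗ₖ U)) :
    trace (twirl μ M * S) = trace (M * S) := by
  rw [← Matrix.one_mul (twirl μ M), twirl,
    mul_entrywiseIntegral_mul (integrable_twirl_integrand μ M),
    trace_entrywiseIntegral (integrable_apply_of_continuous (by fun_prop))]
  have hconj : ∀ U : unitaryGroup n ℂ, trace (((U : Matrix n n ℂ) ⊗ₖ (U : Matrix n n ℂ)) * M *
      ((U : Matrix n n ℂ) ⊗ₖ (U : Matrix n n ℂ))ᴴ * S) = trace (M * S) := fun U => by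
    refine trace_mul_mul_mul_eq_of_commute (kronecker_self_conjTranspose_mul_self U.2) ?_
    rw [conjTranspose_kronecker, ← star_eq_conjTranspose]
    exact hS _ (Unitary.star_mem U.2)
  simp only [Matrix.one_mul, hconj, integral_const, probReal_univ, one_smul]

end Twirl

section Commutant

variable {n : Type*} [Fintype n] [DecidableEq n] {X : Matrix (n × n) (n × n) ℂ}

theorem apply_mul_eq_of_commute_diagonal_kronecker {w : n → ℂ}
    (h : Commute X (diagonal w ⊗ₖ diagonal w)) (p q : n × n) :
    X p q * (w q.1 * w q.2) = w p.1 * w p.2 * X p q := by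
  have := congrFun₂ h p q
  rwa [diagonal_kronecker_diagonal, mul_diagonal, diagonal_mul] at this

theorem apply_eq_zero_of_commute_kronecker_self
    (hX : ∀ V ∈ unitaryGroup n ℂ, Commute X (V ⊗ₖ V)) {p q : n × n} (h₁ : q ≠ p)
    (h₂ : q ≠ p.swap) : X p q = 0 := by
  by_contra hpq
  -- Conjugating by the phase `I` at `m` compares how often `m` occurs in `p` and in `q`.
  refine (Prod.eq_or_eq_swap_of_count_eq fun m => ?_).elim h₁ h₂
  set w : n → ℂ := fun t => Complex.I ^ (if t = m then 1 else 0)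
  have hw : diagonal w ∈ unitaryGroup n ℂ := diagonal_mem_unitaryGroup fun t => by
    rw [star_pow, ← mul_pow, Complex.star_def, Complex.conj_I, neg_mul, Complex.I_mul_I, neg_neg,
      one_pow]
  have := apply_mul_eq_of_commute_diagonal_kronecker (hX _ hw) p q
  rw [mul_comm] at this
  have := mul_right_cancel₀ hpq this
  simp only [w, ← pow_add] at this
  exact Complex.I_pow_inj (by split_ifs <;> omega) (by split_ifs <;> omega) this

theorem apply_perm_eq_of_commute_kronecker_self
    (hX : ∀ V ∈ unitaryGroup n ℂ, Commute X (V ⊗ₖ V)) (σ : Equiv.Perm n) (i j k l : n) :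
    X (σ i, σ j) (σ k, σ l) = X (i, j) (k, l) := by
  have h := hX _ (σ.permMatrix_mem_unitaryGroup (α := ℂ))
  rw [Equiv.Perm.permMatrix_kronecker_permMatrix, Commute, SemiconjBy, Equiv.Perm.permMatrix,
    PEquiv.mul_toMatrix_toPEquiv, PEquiv.toMatrix_toPEquiv_mul] at h
  simpa using (congrFun₂ h (i, j) (σ k, σ l)).symm

end Commutant

section SwapMatrix

variable {d : ℕ}

theorem swapMatrix_mul_kronecker (A B : Matrix (Fin d) (Fin d) ℂ) :
    swapMatrix d * (A ⊗ₖ B) = (B ⊗ₖ A) * swapMatrix d := by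
  ext ⟨i, j⟩ ⟨k, l⟩
  simp [mul_apply, Fintype.sum_prod_type, swapMatrix, ite_and, mul_comm]

theorem swapMatrix_mul_self : swapMatrix d * swapMatrix d = 1 := by
  ext ⟨i, j⟩ ⟨k, l⟩
  simp [mul_apply, Fintype.sum_prod_type, swapMatrix, ite_and, one_apply, and_comm, eq_comm]

theorem trace_swapMatrix : trace (swapMatrix d) = d := by
  rw [trace, Fintype.sum_prod_type]
  simp [swapMatrix, eq_comm]

theorem eq_smul_one_add_smul_swapMatrix_add_smul_diagonal
    {X : Matrix (Fin d × Fin d) (Fin d × Fin d) ℂ}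
    (hX : ∀ V ∈ unitaryGroup (Fin d) ℂ, Commute X (V ⊗ₖ V)) {i₀ i₁ : Fin d} (h₀₁ : i₀ ≠ i₁) :
    X = X (i₀, i₁) (i₀, i₁) • 1 + X (i₀, i₁) (i₁, i₀) • swapMatrix d +
      (X (i₀, i₀) (i₀, i₀) - X (i₀, i₁) (i₀, i₁) - X (i₀, i₁) (i₁, i₀)) •
        diagonal fun p => if p.1 = p.2 then 1 else 0 := by
  have hperm := apply_perm_eq_of_commute_kronecker_self hX
  have hoff : ∀ {i j}, i ≠ j →
      X (i, j) (i, j) = X (i₀, i₁) (i₀, i₁) ∧ X (i, j) (j, i) = X (i₀, i₁) (i₁, i₀) := by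
    intro i j hij
    obtain ⟨σ, rfl, rfl⟩ := Equiv.Perm.exists_apply_eq_apply_eq h₀₁ hij
    exact ⟨hperm σ _ _ _ _, hperm σ _ _ _ _⟩
  have hdiag : ∀ i, X (i, i) (i, i) = X (i₀, i₀) (i₀, i₀) := fun i => by
    simpa using hperm (Equiv.swap i₀ i) i₀ i₀ i₀ i₀
  ext ⟨i, j⟩ ⟨k, l⟩
  by_cases hkl : (k, l) = (i, j)
  · obtain ⟨rfl, rfl⟩ := Prod.mk.inj hkl
    by_cases hij : k = l
    · subst hij
      simp [hdiag, swapMatrix]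
    · simp [(hoff hij).1, swapMatrix, hij]
  by_cases hlk : (k, l) = (j, i)
  · obtain ⟨rfl, rfl⟩ := Prod.mk.inj hlk
    have hij : l ≠ k := fun h => hkl (by rw [h])
    simp [(hoff hij).2, swapMatrix, hij, Ne.symm hij]
  · rw [apply_eq_zero_of_commute_kronecker_self hX hkl hlk]
    have hswap : ¬(i = l ∧ j = k) := fun ⟨hil, hjk⟩ => hlk (by rw [hil, hjk])
    simp [swapMatrix, one_apply, Ne.symm hkl, hswap]

theorem exists_eq_smul_one_add_smul_swapMatrix_of_commute (hd : 2 ≤ d)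
    {X : Matrix (Fin d × Fin d) (Fin d × Fin d) ℂ}
    (hX : ∀ V ∈ unitaryGroup (Fin d) ℂ, Commute X (V ⊗ₖ V)) :
    ∃ a b : ℂ, X = a • 1 + b • swapMatrix d := by
  obtain ⟨i₀, i₁, h₀₁⟩ := (Fin.nontrivial_iff_two_le.mpr hd).exists_pair_ne
  have hX' := eq_smul_one_add_smul_swapMatrix_add_smul_diagonal hX h₀₁
  set a := X (i₀, i₁) (i₀, i₁)
  set b := X (i₀, i₁) (i₁, i₀)
  set e := X (i₀, i₀) (i₀, i₀) - a - b
  set E : Matrix (Fin d × Fin d) (Fin d × Fin d) ℂ := diagonal fun p => if p.1 = p.2 then 1 else 0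
  refine ⟨a, b, ?_⟩
  suffices he : e = 0 by rwa [he, zero_smul, add_zero] at hX'
  have hE : ∀ V ∈ unitaryGroup (Fin d) ℂ, Commute (e • E) (V ⊗ₖ V) := fun V hV => by
    have hab : Commute (a • 1 + b • swapMatrix d) (V ⊗ₖ V) :=
      ((Commute.one_left _).smul_left a).add_left
        (Commute.smul_left (swapMatrix_mul_kronecker V V) b)
    have hsub : e • E = X - (a • 1 + b • swapMatrix d) := by rw [hX', add_sub_cancel_left]
    exact hsub ▸ (hX V hV).sub_left hab
  set v : Fin d → ℂ := Pi.single i₀ (3 / 5) + Pi.single i₁ (4 / 5)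
  have hv : star v ⬝ᵥ v = 1 := by
    norm_num [v, h₀₁, Ne.symm h₀₁, dotProduct_add]
  have := congrFun₂ (hE _ (householder_mem_unitaryGroup hv)) (i₀, i₀) (i₀, i₁)
  norm_num [E, v, h₀₁, Ne.symm h₀₁, vecMulVec_apply] at this
  exact this

theorem eq_smul_one_add_smul_swapMatrix_of_trace (hd : 2 ≤ d)
    {X : Matrix (Fin d × Fin d) (Fin d × Fin d) ℂ} {a b : ℂ}
    (hX : X = a • 1 + b • swapMatrix d) :
    X = (trace X / ((d : ℂ) ^ 2 - 1) - trace (X * swapMatrix d) / ((d : ℂ) * ((d : ℂ) ^ 2 - 1))) • 1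
      + (trace (X * swapMatrix d) / ((d : ℂ) ^ 2 - 1) - trace X / ((d : ℂ) * ((d : ℂ) ^ 2 - 1))) •
        swapMatrix d := by
  have hd₀ : (d : ℂ) ≠ 0 := by exact_mod_cast (by omega : d ≠ 0)
  have hd₁ : (d : ℂ) ^ 2 - 1 ≠ 0 := sub_ne_zero.mpr (by exact_mod_cast (by nlinarith : d ^ 2 ≠ 1))
  subst hX
  simp only [add_mul, smul_mul, Matrix.one_mul, swapMatrix_mul_self, trace_add, trace_smul,
    trace_one, trace_swapMatrix, Fintype.card_prod, Fintype.card_fin, smul_eq_mul]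
  congr 2 <;> field_simp <;> push_cast <;> ring

end SwapMatrix

/-- The Haar twirl formula (Appendix D): averaging `(U ⊗ U) M (U ⊗ U)†` over the Haar
probability measure on the unitary group yields a combination of the identity and the
swap matrix, entrywise. -/
theorem haar_twirl {d : ℕ} (hd : 2 ≤ d)
    (μ : Measure (Matrix.unitaryGroup (Fin d) ℂ))
    [IsProbabilityMeasure μ] [μ.IsMulLeftInvariant]
    (M : Matrix (Fin d × Fin d) (Fin d × Fin d) ℂ) (p q : Fin d × Fin d) :
    ∫ U : Matrix.unitaryGroup (Fin d) ℂ,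
        (((U : Matrix (Fin d) (Fin d) ℂ) ⊗ₖ (U : Matrix (Fin d) (Fin d) ℂ)) * M *
          ((U : Matrix (Fin d) (Fin d) ℂ) ⊗ₖ (U : Matrix (Fin d) (Fin d) ℂ))ᴴ) p q ∂μ
      = ((M.trace / ((d : ℂ) ^ 2 - 1)
            - (M * swapMatrix d).trace / ((d : ℂ) * ((d : ℂ) ^ 2 - 1))) •
              (1 : Matrix (Fin d × Fin d) (Fin d × Fin d) ℂ)
          + ((M * swapMatrix d).trace / ((d : ℂ) ^ 2 - 1)
            - M.trace / ((d : ℂ) * ((d : ℂ) ^ 2 - 1))) • swapMatrix d) p q := by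
  obtain ⟨a, b, hspan⟩ := exists_eq_smul_one_add_smul_swapMatrix_of_commute hd
    fun V hV => twirl_commute_kronecker_self μ M hV
  have htr : trace (twirl μ M) = trace M := by
    simpa using trace_twirl_mul μ M (S := 1) fun U _ => Commute.one_left _
  have htrF : trace (twirl μ M * swapMatrix d) = trace (M * swapMatrix d) :=
    trace_twirl_mul μ M fun U _ => swapMatrix_mul_kronecker U U
  change twirl μ M p q = _
  rw [← htr, ← htrF, ← eq_smul_one_add_smul_swapMatrix_of_trace hd hspan]
end
end
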